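/- For integers a ≤ 0 < b and k ∈ Z, the map φ(x,y,z) = (−y, −x, −(k−1)x − (k−1)y + z) is a unimodular affine transformation of Z^3 that fixes the set {(0,0,a),(0,0,b),(1,-1,0),(-1,1,0)} setwise (swapping (1,-1,0) and (-1,1,0)) and swaps (-1,-1,1) and (1,1,2k−1); hence F̃_3(a,b,k) is mapped to itself by an automorphism exchanging the vertices (-1,-1,1) and (1,1,2k−1). -/
import Mathlib


/-- embedding of integer points into `ℝ³` -/
noncomputable def rr (v : Fin 3 → ℤ) : Fin 3 → ℝ := fun i => (v i : ℝ)

/-- The map `φ(x,y,z) = (−y, −x, −(k−1)x − (k−1)y + z)` on `ℤ³`. -/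
def phi (k : ℤ) (v : Fin 3 → ℤ) : Fin 3 → ℤ :=
  ![-v 1, -v 0, -(k - 1) * v 0 - (k - 1) * v 1 + v 2]

/-- The same map on `ℝ³`. -/
noncomputable def phiR (k : ℤ) (v : Fin 3 → ℝ) : Fin 3 → ℝ :=
  ![-v 1, -v 0, -((k : ℝ) - 1) * v 0 - ((k : ℝ) - 1) * v 1 + v 2]

/-- Vertex set of `F̃₃(a,b,k)`. -/
def F3Verts (a b k : ℤ) : Set (Fin 3 → ℤ) :=
  {![0, 0, a], ![0, 0, b], ![-1, -1, 1], ![1, -1, 0], ![-1, 1, 0], ![1, 1, 2*k - 1]}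

theorem stmt11 (a b k : ℤ) (ha : a ≤ 0) (hb : 0 < b) (hk0 : 0 ≤ k) (hkb : k ≤ b) :
    -- φ is a unimodular affine transformation of ℤ³:
    Function.Bijective (phi k) ∧
    (∀ v : Fin 3 → ℤ, phiR k (rr v) = rr (phi k v)) ∧
    -- it fixes the set {(0,0,a),(0,0,b),(1,-1,0),(-1,1,0)} setwise:
    phi k '' {![0, 0, a], ![0, 0, b], ![1, -1, 0], ![-1, 1, 0]} =
      {![0, 0, a], ![0, 0, b], ![1, -1, 0], ![-1, 1, 0]} ∧
    -- it swaps (-1,-1,1) and (1,1,2k-1):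
    phi k ![-1, -1, 1] = ![1, 1, 2*k - 1] ∧
    phi k ![1, 1, 2*k - 1] = ![-1, -1, 1] ∧
    -- hence F̃₃(a,b,k) is mapped to itself by an automorphism exchanging
    -- the vertices (-1,-1,1) and (1,1,2k−1):
    phi k '' F3Verts a b k = F3Verts a b k ∧
    phiR k '' convexHull ℝ (rr '' F3Verts a b k) = convexHull ℝ (rr '' F3Verts a b k) := by

  have hinv : Function.Involutive (phi k) := by
    intro v; funext i; fin_cases i <;> simp [phi] <;> ring
  have hcomm : ∀ v : Fin 3 → ℤ, phiR k (rr v) = rr (phi k v) := by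
    intro v; funext i; fin_cases i <;> simp [phiR, phi, rr] <;> push_cast <;> ring
  have h1 : phi k ![0, 0, a] = ![0, 0, a] := by
    funext i; fin_cases i <;> simp [phi]
  have h2 : phi k ![0, 0, b] = ![0, 0, b] := by
    funext i; fin_cases i <;> simp [phi]
  have h3 : phi k ![1, -1, 0] = ![1, -1, 0] := by
    funext i; fin_cases i <;> simp [phi]
  have h4 : phi k ![-1, 1, 0] = ![-1, 1, 0] := by
    funext i; fin_cases i <;> simp [phi] <;> ring
  have h5 : phi k ![-1, -1, 1] = ![1, 1, 2*k - 1] := by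
    funext i; fin_cases i <;> simp [phi] <;> ring
  have h6 : phi k ![1, 1, 2*k - 1] = ![-1, -1, 1] := by
    funext i; fin_cases i <;> simp [phi] <;> ring
  have hF : phi k '' F3Verts a b k = F3Verts a b k := by
    unfold F3Verts
    simp only [Set.image_insert_eq, Set.image_singleton, h1, h2, h3, h4, h5, h6]
    ext x; simp only [Set.mem_insert_iff, Set.mem_singleton_iff]; tauto
  have hlin : IsLinearMap ℝ (phiR k) := by
    constructor
    · intro u v; funext i; fin_cases i <;> simp [phiR] <;> ring
    · intro c v; funext i; fin_cases i <;> simp [phiR] <;> ring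
  refine ⟨hinv.bijective, hcomm, ?_, h5, h6, hF, ?_⟩
  · simp only [Set.image_insert_eq, Set.image_singleton, h1, h2, h3, h4]
  · rw [hlin.image_convexHull, Set.image_image]
    have : (fun v => phiR k (rr v)) '' F3Verts a b k = rr '' (phi k '' F3Verts a b k) := by
      rw [Set.image_image]; exact Set.image_congr' hcomm
    rw [this, hF]
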